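/- For a finite strategic game, if a mixed strategy profile p is a Nash equilibrium of a perturbed game (G, η), then for every player i and pure strategies s_ij, s_il in S_i, u_i(s_ij, p_{-i}) < u_i(s_il, p_{-i}) implies p_ij = η_ij, i.e., any suboptimal pure strategy is played with exactly its minimum allowed probability. -/

import Mathlib

open Finset Filter

/-- Expected payoff of a mixed strategy profile `p` for pure payoff function `U`. -/
noncomputable def expPay {ι : Type*} [Fintype ι] [DecidableEq ι] {S : ι → Type*} [∀ i, Fintype (S i)]
    (U : (∀ i, S i) → ℝ) (p : ∀ i, S i → ℝ) : ℝ :=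
  ∑ s : ∀ i, S i, (∏ i, p i (s i)) * U s

/-- The degenerate mixed strategy putting all mass on the pure strategy `s`. -/
def pureStrat {J : Type*} [DecidableEq J] (s : J) : J → ℝ := fun t => if t = s then 1 else 0

/-- `q` is a mixed strategy: a probability vector. -/
def IsMixed {J : Type*} [Fintype J] (q : J → ℝ) : Prop := (∀ s, 0 ≤ q s) ∧ ∑ s, q s = 1

/-!
The expected payoff is linear in player `i`'s own mixed strategy, with the payoffs of the pure
strategies as coefficients. If `s` is a worse reply than `t` but `p i s > η i s`, shifting the
excess mass `p i s - η i s` from `s` to `t` stays inside `Δ_i(η_i)` and strictly raises `i`'s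
payoff, contradicting the equilibrium property.
-/

section Transfer

variable {J : Type*} [DecidableEq J]

def transferMass (q : J → ℝ) (ε : ℝ) (s t : J) : J → ℝ :=
  fun a => q a + ε * (pureStrat t a - pureStrat s a)

theorem transferMass_apply_self {q : J → ℝ} {s t : J} (hst : s ≠ t) (ε : ℝ) :
    transferMass q ε s t s = q s - ε := by
  simp [transferMass, pureStrat, hst, sub_eq_add_neg]

theorem le_transferMass_apply {q : J → ℝ} {ε : ℝ} (hε : 0 ≤ ε) {s t a : J} (has : a ≠ s) :
    q a ≤ transferMass q ε s t a := by
  obtain rfl | hat := eq_or_ne a t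
  · simp [transferMass, pureStrat, has, hε]
  · simp [transferMass, pureStrat, has, hat]

theorem le_transferMass_excess {η q : J → ℝ} (hηq : ∀ a, η a ≤ q a) {s t : J} (hst : s ≠ t)
    (a : J) : η a ≤ transferMass q (q s - η s) s t a := by
  obtain rfl | has := eq_or_ne a s
  · simp [transferMass_apply_self hst]
  · exact (hηq a).trans (le_transferMass_apply (sub_nonneg.2 (hηq s)) has)

variable [Fintype J]

theorem sum_transferMass_mul (q F : J → ℝ) (ε : ℝ) (s t : J) :
    ∑ a, transferMass q ε s t a * F a = ∑ a, q a * F a + ε * (F t - F s) := by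
  simp only [transferMass, pureStrat, add_mul, mul_sub, sub_mul, mul_ite, ite_mul, mul_one,
    mul_zero, zero_mul, sum_add_distrib, sum_sub_distrib, sum_ite_eq', mem_univ, if_true]

theorem sum_transferMass (q : J → ℝ) (ε : ℝ) (s t : J) :
    ∑ a, transferMass q ε s t a = ∑ a, q a := by
  simpa using sum_transferMass_mul q 1 ε s t

theorem isMixed_transferMass_excess {η q : J → ℝ} (hη : ∀ a, 0 ≤ η a) (hq : IsMixed q)
    (hηq : ∀ a, η a ≤ q a) {s t : J} (hst : s ≠ t) :
    IsMixed (transferMass q (q s - η s) s t) :=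
  ⟨fun a => (hη a).trans (le_transferMass_excess hηq hst a),
    (sum_transferMass q _ s t).trans hq.2⟩

end Transfer

section ExpectedPayoff

variable {ι : Type*} [Fintype ι] [DecidableEq ι] {S : ι → Type*} [∀ i, Fintype (S i)]

theorem expPay_update (U : (∀ j, S j) → ℝ) (p : ∀ j, S j → ℝ) (i : ι) (q : S i → ℝ) :
    expPay U (Function.update p i q)
      = ∑ s : ∀ j, S j, q (s i) * ((∏ j ∈ univ.erase i, p j (s j)) * U s) := by
  refine sum_congr rfl fun s _ => ?_
  rw [← mul_assoc, ← mul_prod_erase univ _ (mem_univ i), Function.update_self]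
  congr 2
  exact prod_congr rfl fun j hj => by rw [Function.update_of_ne (ne_of_mem_erase hj)]

variable [∀ i, DecidableEq (S i)]

theorem expPay_update_eq_sum_mul (U : (∀ j, S j) → ℝ) (p : ∀ j, S j → ℝ) (i : ι)
    (q : S i → ℝ) :
    expPay U (Function.update p i q)
      = ∑ a, q a * expPay U (Function.update p i (pureStrat a)) := by
  simp only [expPay_update, mul_sum]
  rw [sum_comm]
  refine sum_congr rfl fun s _ => ?_
  simp [pureStrat, mul_ite, ite_mul, mul_comm]

theorem expPay_eq_sum_mul (U : (∀ j, S j) → ℝ) (p : ∀ j, S j → ℝ) (i : ι) :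
    expPay U p = ∑ a, p i a * expPay U (Function.update p i (pureStrat a)) := by
  conv_lhs => rw [← Function.update_eq_self i p]
  exact expPay_update_eq_sum_mul U p i (p i)

theorem expPay_update_transferMass (U : (∀ j, S j) → ℝ) (p : ∀ j, S j → ℝ) (i : ι)
    (ε : ℝ) (s t : S i) :
    expPay U (Function.update p i (transferMass (p i) ε s t))
      = expPay U p + ε * (expPay U (Function.update p i (pureStrat t))
          - expPay U (Function.update p i (pureStrat s))) := by
  rw [expPay_update_eq_sum_mul, sum_transferMass_mul, ← expPay_eq_sum_mul]

end ExpectedPayoff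

theorem stmt0_general {ι : Type*} [Fintype ι] [DecidableEq ι]
    {S : ι → Type*} [∀ i, Fintype (S i)] [∀ i, DecidableEq (S i)]
    (U : ∀ i, (∀ j, S j) → ℝ) (η : ∀ i, S i → ℝ) (p : ∀ i, S i → ℝ)
    (hηpos : ∀ i s, 0 < η i s)
    (hp : ∀ i, IsMixed (p i) ∧ ∀ s, η i s ≤ p i s)
    (hNash : ∀ i, ∀ q : S i → ℝ, IsMixed q → (∀ s, η i s ≤ q s) →
      expPay (U i) (Function.update p i q) ≤ expPay (U i) p) :
    ∀ i, ∀ s t : S i,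
      expPay (U i) (Function.update p i (pureStrat s)) <
        expPay (U i) (Function.update p i (pureStrat t)) → p i s = η i s := by
  intro i s t hlt
  by_contra hne
  have hst : s ≠ t := by rintro rfl; exact hlt.false
  have hexcess : 0 < p i s - η i s := sub_pos.2 (((hp i).2 s).lt_of_ne' hne)
  have hdev := hNash i _
    (isMixed_transferMass_excess (fun a => (hηpos i a).le) (hp i).1 (hp i).2 hst)
    (le_transferMass_excess (hp i).2 hst)
  rw [expPay_update_transferMass] at hdev
  linarith [mul_pos hexcess (sub_pos.2 hlt)]

/-- In a Nash equilibrium of a perturbed game `(G, η)`, any pure strategy that is a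
suboptimal response is played with exactly its minimum allowed probability `η i s`. -/
theorem stmt0 {ι : Type*} [Fintype ι] [DecidableEq ι]
    {S : ι → Type*} [∀ i, Fintype (S i)] [∀ i, DecidableEq (S i)]
    (U : ∀ i, (∀ j, S j) → ℝ) (η : ∀ i, S i → ℝ) (p : ∀ i, S i → ℝ)
    (hηpos : ∀ i s, 0 < η i s) (hηsum : ∀ i, ∑ s, η i s < 1)
    (hp : ∀ i, IsMixed (p i) ∧ ∀ s, η i s ≤ p i s)
    (hNash : ∀ i, ∀ q : S i → ℝ, IsMixed q → (∀ s, η i s ≤ q s) →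
      expPay (U i) (Function.update p i q) ≤ expPay (U i) p) :
    ∀ i, ∀ s t : S i,
      expPay (U i) (Function.update p i (pureStrat s)) <
        expPay (U i) (Function.update p i (pureStrat t)) → p i s = η i s :=
  stmt0_general U η p hηpos hp hNash
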